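/- Let G be a finite connected locally connected graph, let z be a vertex, and let a ≠ z be a vertex whose class [a]_z = {w ≠ z : line(z,w) = line(z,a)} has at least two elements. Suppose there exists a vertex v distinct from z and a with d(z,v) = d(z,a) + d(a,v). Then there exists a vertex u adjacent to a such that every b ∈ [a]_z is adjacent to both u and z, and d(z,u) = d(z,b) + d(b,u) for each b ∈ [a]_z. -/
import Mathlib


open SimpleGraph

/-- The line defined by two vertices `a` and `b` of a graph: `{a, b}` together with all
vertices `c` lying on a shortest path through `a`, `b` and `c` (in some order). -/
def SimpleGraph.line {V : Type*} (G : SimpleGraph V) (a b : V) : Set V :=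
  {a, b} ∪ {c | G.dist a b = G.dist a c + G.dist c b ∨
                G.dist a c = G.dist a b + G.dist b c ∨
                G.dist b c = G.dist b a + G.dist a c}

/-- The set of all lines of a graph. -/
def SimpleGraph.lineSet {V : Type*} (G : SimpleGraph V) : Set (Set V) :=
  {s | ∃ a b : V, a ≠ b ∧ s = G.line a b}

/-- A graph is locally connected if the subgraph induced on each neighborhood is connected. -/
def SimpleGraph.LocallyConnected {V : Type*} (G : SimpleGraph V) : Prop :=
  ∀ v : V, (G.induce (G.neighborSet v)).Connected

/-- The class `[u]_z`: all vertices `w ≠ z` defining the same line with `z` as `u` does. -/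
def SimpleGraph.lineClass {V : Type*} (G : SimpleGraph V) (z u : V) : Set V :=
  {w | w ≠ z ∧ G.line z w = G.line z u}

private lemma aux_lip {V : Type*} {G : SimpleGraph V} (hG : G.Connected) {x y : V}
    (h : G.Adj x y) (z : V) : G.dist z y ≤ G.dist z x + 1 := by
  have ht := hG.dist_triangle (u := z) (v := x) (w := y)
  have h1 : G.dist x y = 1 := SimpleGraph.dist_eq_one_iff_adj.mpr h
  omega

private lemma aux_penult {V : Type*} {G : SimpleGraph V} (hG : G.Connected) {z x : V} {n : ℕ}
    (h : G.dist z x = n + 1) : ∃ p, G.Adj p x ∧ G.dist z p = n := by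
  have hxz : G.dist x z = n + 1 := by rw [SimpleGraph.dist_comm]; exact h
  obtain ⟨w, hw⟩ := hG.exists_walk_length_eq_dist x z
  rw [hxz] at hw
  cases w with
  | nil => simp at hw
  | cons hadj q =>
    rename_i p
    have hw' : q.length + 1 = n + 1 := by simpa using hw
    have h1 : G.dist z p ≤ n := by
      have := SimpleGraph.dist_le q.reverse
      rw [SimpleGraph.Walk.length_reverse] at this
      omega
    have h2 : G.dist z x ≤ G.dist z p + 1 := aux_lip hG hadj.symm z
    exact ⟨p, hadj.symm, by omega⟩

private lemma aux_beyond {V : Type*} {G : SimpleGraph V} (hG : G.Connected) {z x v : V}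
    (hxv : x ≠ v) (h : G.dist z v = G.dist z x + G.dist x v) :
    ∃ w, G.Adj x w ∧ G.dist z w = G.dist z x + 1 := by
  have hpos : 0 < G.dist x v := hG.pos_dist_of_ne hxv
  obtain ⟨m, hm⟩ : ∃ m, G.dist x v = m + 1 := ⟨G.dist x v - 1, by omega⟩
  have hvx : G.dist v x = m + 1 := by rw [SimpleGraph.dist_comm]; exact hm
  obtain ⟨w, hwadj, hwd⟩ := aux_penult hG hvx
  refine ⟨w, hwadj.symm, ?_⟩
  have h1 : G.dist z w ≤ G.dist z x + 1 := aux_lip hG hwadj.symm z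
  have h2 : G.dist z v ≤ G.dist z w + G.dist w v := hG.dist_triangle
  have h3 : G.dist w v = m := by rw [SimpleGraph.dist_comm]; exact hwd
  omega

private lemma aux_cross2 {V : Type*} {G : SimpleGraph V} (hlc : G.LocallyConnected) (a : V)
    (f : V → ℕ) {x y : V} {r : ℕ} (hx : G.Adj a x) (hy : G.Adj a y)
    (h1 : f x ≤ r) (h2 : r < f y) :
    ∃ s t, G.Adj a s ∧ G.Adj a t ∧ G.Adj s t ∧ f s ≤ r ∧ r < f t := by
  suffices H : ∀ (x' y' : G.neighborSet a), (G.induce (G.neighborSet a)).Walk x' y' →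
      f x'.1 ≤ r → r < f y'.1 →
      ∃ s t, G.Adj a s ∧ G.Adj a t ∧ G.Adj s t ∧ f s ≤ r ∧ r < f t by
    obtain ⟨w⟩ := (hlc a).preconnected ⟨x, hx⟩ ⟨y, hy⟩
    exact H ⟨x, hx⟩ ⟨y, hy⟩ w h1 h2
  intro x' y' w
  induction w with
  | nil => intro ha hb; omega
  | @cons u v' y'' hadj q ih =>
    intro ha hb
    by_cases hc : f v'.1 ≤ r
    · exact ih hc hb
    · exact ⟨u.1, v'.1, u.2, v'.2, hadj, ha, by omega⟩

private lemma aux_crossd {V : Type*} {G : SimpleGraph V} (hG : G.Connected)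
    (hlc : G.LocallyConnected) {a z x y : V} {r : ℕ}
    (hx : G.Adj a x) (hy : G.Adj a y) (h1 : G.dist z x ≤ r) (h2 : r + 1 ≤ G.dist z y) :
    ∃ s t, G.Adj a s ∧ G.Adj a t ∧ G.Adj s t ∧ G.dist z s = r ∧ G.dist z t = r + 1 := by
  obtain ⟨s, t, has, hat, hst, hs, ht⟩ :=
    aux_cross2 hlc a (G.dist z) hx hy h1 (by omega)
  have hl := aux_lip hG hst z
  exact ⟨s, t, has, hat, hst, by omega, by omega⟩

private lemma aux_jump {V : Type*} {G : SimpleGraph V} (hG : G.Connected)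
    (hlc : G.LocallyConnected) {a b x y : V} {c : ℕ}
    (hx : G.Adj a x) (hy : G.Adj a y) (h1 : G.dist b x ≤ c + 1) (h2 : c + 2 ≤ G.dist b y)
    (hall : ∀ u, G.Adj a u → G.dist b u ≠ c + 1) : False := by
  obtain ⟨s, t, has, hat, hst, hs, ht⟩ :=
    aux_cross2 hlc a (G.dist b) hx hy h1 (by omega)
  have hl := aux_lip hG hst b
  have := hall s has
  omega

private lemma mem_line_iff {V : Type*} (G : SimpleGraph V) (p q c : V) :
    c ∈ G.line p q ↔ c = p ∨ c = q ∨ G.dist p q = G.dist p c + G.dist c q ∨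
      G.dist p c = G.dist p q + G.dist q c ∨ G.dist q c = G.dist q p + G.dist p c := by
  simp only [SimpleGraph.line, Set.mem_union, Set.mem_insert_iff, Set.mem_singleton_iff,
    Set.mem_setOf_eq, or_assoc]

private lemma aux_inline {V : Type*} {G : SimpleGraph V} {z x t : V}
    (hadj : G.Adj x t) (hd : G.dist z t = G.dist z x + 1) : t ∈ G.line z x := by
  rw [mem_line_iff]
  right; right; right; left
  have h1 : G.dist x t = 1 := SimpleGraph.dist_eq_one_iff_adj.mpr hadj
  omega

private lemma aux_notinline {V : Type*} {G : SimpleGraph V} (hG : G.Connected) {z x s : V}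
    (hxz : x ≠ z) (hadj : G.Adj x s) (hd : G.dist z s = G.dist z x) : s ∉ G.line z x := by
  have hk : 0 < G.dist z x := hG.pos_dist_of_ne (Ne.symm hxz)
  have h1 : G.dist x s = 1 := SimpleGraph.dist_eq_one_iff_adj.mpr hadj
  have h2 : G.dist s x = G.dist x s := SimpleGraph.dist_comm
  have h3 : G.dist x z = G.dist z x := SimpleGraph.dist_comm
  rw [mem_line_iff]
  push_neg
  refine ⟨?_, fun hh => (hadj.ne (hh ▸ rfl)).elim, by omega, by omega, by omega⟩
  intro hh
  rw [hh, SimpleGraph.dist_self] at hd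
  omega

private lemma aux_beta {V : Type*} {G : SimpleGraph V} (hG : G.Connected)
    (hlc : G.LocallyConnected) {z x y w : V} (hxz : x ≠ z) (hyz : y ≠ z) (hyx : y ≠ x)
    (hline : G.line z x = G.line z y)
    (hw : G.Adj x w) (hwd : G.dist z w = G.dist z x + 1)
    (hbeyond : G.dist z y = G.dist z x + G.dist x y) : False := by
  have hK : 0 < G.dist z x := hG.pos_dist_of_ne (Ne.symm hxz)
  have hE : 0 < G.dist x y := hG.pos_dist_of_ne (Ne.symm hyx)
  obtain ⟨n, hn⟩ : ∃ n, G.dist z x = n + 1 := ⟨G.dist z x - 1, by omega⟩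
  obtain ⟨p, hpx, hpd⟩ := aux_penult hG hn
  obtain ⟨s, t, hxs, hxt, hst, hsd, htd⟩ :=
    aux_crossd hG hlc (a := x) (z := z) (r := G.dist z x) hpx.symm hw (by omega) (by omega)
  have hsL : s ∉ G.line z y := by
    rw [← hline]; exact aux_notinline hG hxz hxs (by omega)
  have htL : t ∈ G.line z y := by
    rw [← hline]; exact aux_inline hxt (by omega)
  rw [mem_line_iff] at htL
  have hst1 : G.dist s t = 1 := SimpleGraph.dist_eq_one_iff_adj.mpr hst
  have cyz : G.dist y z = G.dist z y := SimpleGraph.dist_comm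
  have Tzs : G.dist z y ≤ G.dist z s + G.dist s y := hG.dist_triangle
  have Tst : G.dist s y ≤ G.dist s t + G.dist t y := hG.dist_triangle
  have Tyt : G.dist y t ≤ G.dist y s + G.dist s t := hG.dist_triangle
  have Tys : G.dist y s ≤ G.dist y z + G.dist z s := hG.dist_triangle
  have cys : G.dist y s = G.dist s y := SimpleGraph.dist_comm
  have cyt : G.dist y t = G.dist t y := SimpleGraph.dist_comm
  apply hsL
  rw [mem_line_iff]
  rcases htL with h | h | h | h | h
  · rw [h, SimpleGraph.dist_self] at htd; omega
  · right; right; left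
    rw [h] at htd hst1
    omega
  · right; right; left
    omega
  · have hty : y = t := hG.dist_eq_zero_iff.mp (by omega)
    right; right; left
    rw [← hty] at htd hst1
    omega
  · right; right; right; right
    omega

private lemma aux_gamma {V : Type*} {G : SimpleGraph V} (hG : G.Connected)
    (hlc : G.LocallyConnected) {z x y w : V} (hxz : x ≠ z) (hyz : y ≠ z) (hyx : y ≠ x)
    (hline : G.line z x = G.line z y)
    (hw : G.Adj x w) (hwd : G.dist z w = G.dist z x + 1) :
    G.dist x y = G.dist x z + G.dist z y := by
  have hyL : y ∈ G.line z x := by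
    rw [hline, mem_line_iff]; right; left; rfl
  rw [mem_line_iff] at hyL
  rcases hyL with h | h | h | h | h
  · exact absurd h hyz
  · exact absurd h hyx
  · -- d z x = d z y + d y x : y has beyond-vertex x
    obtain ⟨wy, hwy, hwyd⟩ := aux_beyond hG (x := y) (v := x) hyx h
    exact absurd h (fun _ => aux_beta hG hlc hyz hxz (Ne.symm hyx) hline.symm hwy hwyd h)
  · exact absurd h (fun _ => aux_beta hG hlc hxz hyz hyx hline hw hwd h)
  · exact h

theorem short_gen {V : Type*} [Fintype V] (G : SimpleGraph V)
    (hG : G.Connected) (hlc : G.LocallyConnected)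
    {z a : V} (haz : a ≠ z) (hcard : 2 ≤ (G.lineClass z a).ncard)
    (hv : ∃ v : V, v ≠ z ∧ v ≠ a ∧ G.dist z v = G.dist z a + G.dist a v) :
    ∃ u : V, G.Adj a u ∧ ∀ b ∈ G.lineClass z a,
      G.Adj b u ∧ G.Adj b z ∧ G.dist z u = G.dist z b + G.dist b u := by
  classical
  obtain ⟨v, hvz, hva, hvd⟩ := hv
  obtain ⟨w, haw, hwd⟩ := aux_beyond hG (Ne.symm hva) hvd
  have hk1 : 0 < G.dist z a := hG.pos_dist_of_ne (Ne.symm haz)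
  obtain ⟨b, hbC, hba⟩ := Set.exists_ne_of_one_lt_ncard (s := G.lineClass z a) (by omega) a
  obtain ⟨hbz, hbl⟩ := hbC
  have hj1 : 0 < G.dist z b := hG.pos_dist_of_ne (Ne.symm hbz)
  have cza : G.dist a z = G.dist z a := SimpleGraph.dist_comm
  have czb : G.dist b z = G.dist z b := SimpleGraph.dist_comm
  have hdaw : G.dist a w = 1 := SimpleGraph.dist_eq_one_iff_adj.mpr haw
  have hdab : G.dist a b = G.dist z a + G.dist z b := by
    have := aux_gamma hG hlc haz hbz hba hbl.symm haw hwd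
    omega
  have hkone : G.dist z a = 1 := by
    by_contra hk2'
    have hk2 : 2 ≤ G.dist z a := by omega
    have hwLa : w ∈ G.line z a := aux_inline haw hwd
    have hwLb : w ∈ G.line z b := by rw [hbl]; exact hwLa
    rw [mem_line_iff] at hwLb
    have cwb : G.dist w b = G.dist b w := SimpleGraph.dist_comm
    have Tawb : G.dist a b ≤ G.dist a w + G.dist w b := hG.dist_triangle
    rcases hwLb with h | h | h | h | h
    · rw [h, SimpleGraph.dist_self] at hwd; omega
    · rw [h] at hdaw; omega
    · omega
    · -- W2 : d z w = d z b + d b w ⇒ j = 1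
      have hjone' : G.dist z b = 1 := by omega
      have hbw : G.dist b w = G.dist z a := by omega
      have hbw' : b ≠ w := by
        intro hh
        rw [hh, SimpleGraph.dist_self] at hbw
        omega
      obtain ⟨wb, hbwb, hwbd⟩ := aux_beyond hG (x := b) (v := w) hbw' h
      have hdbwb : G.dist b wb = 1 := SimpleGraph.dist_eq_one_iff_adj.mpr hbwb
      have hwbLb : wb ∈ G.line z b := aux_inline hbwb hwbd
      have hwbLa : wb ∈ G.line z a := by rw [← hbl]; exact hwbLb
      rw [mem_line_iff] at hwbLa
      have Tbwba : G.dist b a ≤ G.dist b wb + G.dist wb a := hG.dist_triangle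
      have cba : G.dist b a = G.dist a b := SimpleGraph.dist_comm
      have cawb : G.dist wb a = G.dist a wb := SimpleGraph.dist_comm
      have hdawb : G.dist a wb = G.dist z a + 2 := by
        rcases hwbLa with h' | h' | h' | h' | h'
        · rw [h', SimpleGraph.dist_self] at hwbd; omega
        · rw [h'] at hdbwb; omega
        · omega
        · have hawb : a = wb := hG.dist_eq_zero_iff.mp (by omega)
          rw [← hawb] at hdbwb
          omega
        · omega
      have hzb : G.Adj b z :=
        (SimpleGraph.dist_eq_one_iff_adj.mp (by omega : G.dist z b = 1)).symm
      refine aux_jump hG hlc (a := b) (b := a) (c := G.dist z a) hzb hbwb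
        (by omega) (by omega) ?_
      intro u hbu heq
      have hu1 : G.dist z u ≤ G.dist z b + 1 := aux_lip hG hbu z
      rcases (by omega : G.dist z u = 0 ∨ G.dist z u = 1 ∨ G.dist z u = 2) with h0 | h0 | h0
      · have hzu : z = u := hG.dist_eq_zero_iff.mp h0
        rw [← hzu] at heq
        omega
      · have hnot : u ∉ G.line z b := aux_notinline hG hbz hbu (by omega)
        apply hnot
        rw [hbl, mem_line_iff]
        right; right; right; right
        omega
      · have hmem : u ∈ G.line z a := by
          rw [← hbl]; exact aux_inline hbu (by omega)
        rw [mem_line_iff] at hmem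
        have hdbu : G.dist b u = 1 := SimpleGraph.dist_eq_one_iff_adj.mpr hbu
        have Tba : G.dist b a ≤ G.dist b u + G.dist u a := hG.dist_triangle
        have cua : G.dist u a = G.dist a u := SimpleGraph.dist_comm
        rcases hmem with h' | h' | h' | h' | h'
        · rw [h', SimpleGraph.dist_self] at h0; omega
        · rw [h'] at hdbu; omega
        · omega
        · omega
        · omega
    · -- W3 : d b w = d b z + d z w
      obtain ⟨n, hn⟩ : ∃ n, G.dist z a = n + 1 := ⟨G.dist z a - 1, by omega⟩
      obtain ⟨p, hpa, hpd⟩ := aux_penult hG hn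
      obtain ⟨c, hc⟩ : ∃ c, G.dist z a + G.dist z b = c + 1 := ⟨G.dist z a + G.dist z b - 1, by omega⟩
      refine aux_jump hG hlc (a := a) (b := b) (c := c) hpa.symm haw ?_ (by omega) ?_
      · have := hG.dist_triangle (u := b) (v := z) (w := p)
        omega
      · intro u hau heq
        have hu1 : G.dist z u ≤ G.dist z a + 1 := aux_lip hG hau z
        have hu2 : G.dist z a ≤ G.dist z u + 1 := aux_lip hG hau.symm z
        have hdau : G.dist a u = 1 := SimpleGraph.dist_eq_one_iff_adj.mpr hau
        have hdua : G.dist u a = G.dist a u := SimpleGraph.dist_comm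
        have Tabu : G.dist a b ≤ G.dist a u + G.dist u b := hG.dist_triangle
        have cub : G.dist u b = G.dist b u := SimpleGraph.dist_comm
        rcases (by omega : G.dist z u + 1 = G.dist z a ∨ G.dist z u = G.dist z a ∨
            G.dist z u = G.dist z a + 1) with h0 | h0 | h0
        · have hmem : u ∈ G.line z b := by
            rw [hbl, mem_line_iff]
            right; right; left
            omega
          rw [mem_line_iff] at hmem
          rcases hmem with h' | h' | h' | h' | h'
          · rw [h', SimpleGraph.dist_self] at h0; omega
          · rw [h'] at hdau; omega
          · omega
          · omega
          · omega
        · have hnot : u ∉ G.line z a := aux_notinline hG haz hau (by omega)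
          apply hnot
          rw [← hbl, mem_line_iff]
          right; right; right; right
          omega
        · have hmem : u ∈ G.line z b := by
            rw [hbl]; exact aux_inline hau (by omega)
          rw [mem_line_iff] at hmem
          rcases hmem with h' | h' | h' | h' | h'
          · rw [h', SimpleGraph.dist_self] at h0; omega
          · rw [h'] at hdau; omega
          · omega
          · omega
          · omega
  -- now d z a = 1
  have hzadj : G.Adj z a := SimpleGraph.dist_eq_one_iff_adj.mp hkone
  have hwd2 : G.dist z w = 2 := by omega
  refine ⟨w, haw, ?_⟩
  intro b' hb'
  obtain ⟨hb'z, hb'l⟩ := hb'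
  by_cases hb'a : b' = a
  · subst hb'a
    exact ⟨haw, hzadj.symm, by omega⟩
  · have hjb'1 : 0 < G.dist z b' := hG.pos_dist_of_ne (Ne.symm hb'z)
    have czb' : G.dist b' z = G.dist z b' := SimpleGraph.dist_comm
    have hdab' : G.dist a b' = G.dist z a + G.dist z b' := by
      have := aux_gamma hG hlc haz hb'z hb'a hb'l.symm haw hwd
      omega
    have hwLb' : w ∈ G.line z b' := by rw [hb'l]; exact aux_inline haw hwd
    have hjone : G.dist z b' = 1 := by
      by_contra hj2'
      have hj2 : 2 ≤ G.dist z b' := by omega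
      have hmem := hwLb'
      rw [mem_line_iff] at hmem
      have cwb' : G.dist w b' = G.dist b' w := SimpleGraph.dist_comm
      have Tawb' : G.dist a b' ≤ G.dist a w + G.dist w b' := hG.dist_triangle
      have hdb'w : G.dist b' w = G.dist z b' + 2 := by
        rcases hmem with h' | h' | h' | h' | h'
        · rw [h', SimpleGraph.dist_self] at hwd2; omega
        · rw [h'] at hdaw; omega
        · omega
        · have hbw'' : b' = w := hG.dist_eq_zero_iff.mp (by omega)
          rw [← hbw''] at hdaw
          omega
        · omega
      refine aux_jump hG hlc (a := a) (b := b') (c := G.dist z b') hzadj.symm haw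
        (by omega) (by omega) ?_
      intro u hau heq
      have hu1 : G.dist z u ≤ 2 := by
        have := aux_lip hG hau z; omega
      have hdau : G.dist a u = 1 := SimpleGraph.dist_eq_one_iff_adj.mpr hau
      have hdua : G.dist u a = G.dist a u := SimpleGraph.dist_comm
      have Tab'u : G.dist a b' ≤ G.dist a u + G.dist u b' := hG.dist_triangle
      have cub' : G.dist u b' = G.dist b' u := SimpleGraph.dist_comm
      rcases (by omega : G.dist z u = 0 ∨ G.dist z u = 1 ∨ G.dist z u = 2) with h0 | h0 | h0
      · have hzu : z = u := hG.dist_eq_zero_iff.mp h0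
        rw [← hzu] at heq
        omega
      · have hnot : u ∉ G.line z a := aux_notinline hG haz hau (by omega)
        apply hnot
        rw [← hb'l, mem_line_iff]
        right; right; right; right
        omega
      · have hmem2 : u ∈ G.line z b' := by
          rw [hb'l]; exact aux_inline hau (by omega)
        rw [mem_line_iff] at hmem2
        rcases hmem2 with h' | h' | h' | h' | h'
        · rw [h', SimpleGraph.dist_self] at h0; omega
        · rw [h'] at heq; rw [SimpleGraph.dist_self] at heq; omega
        · omega
        · omega
        · omega
    have hzb' : G.Adj z b' := SimpleGraph.dist_eq_one_iff_adj.mp hjone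
    have hmem := hwLb'
    rw [mem_line_iff] at hmem
    have hdb'w1 : G.dist b' w = 1 := by
      rcases hmem with h' | h' | h' | h' | h'
      · rw [h', SimpleGraph.dist_self] at hwd2; omega
      · rw [h'] at hdaw; omega
      · omega
      · omega
      · exfalso
        refine aux_jump hG hlc (a := a) (b := b') (c := 1) hzadj.symm haw
          (by omega) (by omega) ?_
        intro u hau heq
        have hu1 : G.dist z u ≤ 2 := by
          have := aux_lip hG hau z; omega
        have hdau : G.dist a u = 1 := SimpleGraph.dist_eq_one_iff_adj.mpr hau
        have hdua : G.dist u a = G.dist a u := SimpleGraph.dist_comm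
        have Tab'u : G.dist a b' ≤ G.dist a u + G.dist u b' := hG.dist_triangle
        have cub' : G.dist u b' = G.dist b' u := SimpleGraph.dist_comm
        rcases (by omega : G.dist z u = 0 ∨ G.dist z u = 1 ∨ G.dist z u = 2) with h0 | h0 | h0
        · have hzu : z = u := hG.dist_eq_zero_iff.mp h0
          rw [← hzu] at heq
          omega
        · have hnot : u ∉ G.line z a := aux_notinline hG haz hau (by omega)
          apply hnot
          rw [← hb'l, mem_line_iff]
          right; right; right; right
          omega
        · have hmem2 : u ∈ G.line z b' := by
            rw [hb'l]; exact aux_inline hau (by omega)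
          rw [mem_line_iff] at hmem2
          rcases hmem2 with h'' | h'' | h'' | h'' | h''
          · rw [h'', SimpleGraph.dist_self] at h0; omega
          · rw [h''] at heq; rw [SimpleGraph.dist_self] at heq; omega
          · omega
          · omega
          · omega
    exact ⟨SimpleGraph.dist_eq_one_iff_adj.mp hdb'w1, hzb'.symm, by omega⟩
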